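/- Let r₁, r₂ ≥ 2 with gcd(r₁,r₂) = 1, and let c be an element of the free product C_{r₁} ∗ C_{r₂}. If the subgroup generated by the two elements t₁ and c⁻¹ t₂ c is the whole group C_{r₁} ∗ C_{r₂}, then there exist integers s and t such that c = t₂^s t₁^t. (This is the generation exercise, Exercise 15, p. 194 of Magnus–Karrass–Solitar, used in the proof of Proposition 3: if {a, c⁻¹ b c} generates ℤ_{r₁} ∗ ℤ_{r₂}, then c has the form b^s a^t.) -/

import Mathlib

abbrev C (n : ℕ) : Type := Multiplicative (ZMod n)

/-!
Pass to the `Bool`-indexed free product `A ∗ B`, where reduced words are available, and write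
`c = b w a` with `b ∈ B`, `a ∈ A` and `w` either trivial or a reduced word from an `A`-letter to a
`B`-letter. Conjugating by `a` shows that `A` and `w⁻¹ B w` generate as well. If `w ≠ 1`, every
element of `⟨A, w⁻¹ B w⟩` outside `A` is a product `a₀ w⁻¹ b₁ w a₁ w⁻¹ b₂ w ⋯` with `bₖ ≠ 1` and
`aₖ ≠ 1` in the interior; since `w` starts in `A` and ends in `B`, this product is already reduced
as written, so it has length at least two. Hence the last letter of `w`, a nontrivial element of
`B`, is not generated.
-/

namespace Monoid.CoprodI

section Monoid

variable {ι : Type*} {M : ι → Type*} [∀ i, Monoid (M i)]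

namespace NeWord

theorem last_ne_one {i j : ι} (w : NeWord M i j) : w.last ≠ 1 := by
  induction w with
  | singleton x hx => exact hx
  | append _ _ _ _ ih => exact ih

theorem two_le_length_toList_append {i j k l : ι} (w₁ : NeWord M i j) (hne : j ≠ k)
    (w₂ : NeWord M k l) : 2 ≤ (append w₁ hne w₂).toList.length := by
  have h₁ := List.length_pos_iff.mpr w₁.toList_ne_nil
  have h₂ := List.length_pos_iff.mpr w₂.toList_ne_nil
  simp only [toList, List.length_append]
  omega

theorem toList_eq_of_prod_eq {i j k l : ι} (u : NeWord M i j) (v : NeWord M k l)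
    (h : u.prod = v.prod) : u.toList = v.toList := by
  classical
  exact congrArg Word.toList (Word.equiv.symm.injective h)

theorem prod_ne_one {i j : ι} (u : NeWord M i j) : u.prod ≠ 1 := by
  classical
  intro h
  have : u.toWord = Word.empty := Word.equiv.symm.injective (h.trans Word.prod_empty.symm)
  exact u.toList_ne_nil (congrArg Word.toList this)

theorem exists_prod_eq {c : CoprodI M} (hc : c ≠ 1) : ∃ (i j : ι) (u : NeWord M i j), u.prod = c := by
  classical
  have hne : Word.equiv c ≠ Word.empty := fun h => hc <| by
    simpa [Word.equiv, Word.prod_empty] using congrArg Word.equiv.symm h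
  obtain ⟨i, j, u, hu⟩ := of_word _ hne
  exact ⟨i, j, u, by rw [NeWord.prod, hu]; exact Word.equiv.symm_apply_apply c⟩

theorem of_ne_prod_of_two_le_length {i j k : ι} (x : M i) (u : NeWord M j k)
    (hu : 2 ≤ u.toList.length) : of x ≠ u.prod := by
  by_cases hx : x = 1
  · rw [hx, map_one]
    exact u.prod_ne_one.symm
  · intro h
    have := congrArg List.length (toList_eq_of_prod_eq (singleton x hx) u (by simpa using h))
    simp only [toList, List.length_singleton] at this
    omega

theorem exists_prod_eq_mul_of_last {i k : ι} (u : NeWord M i k) :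
    (i = k ∧ ∃ a : M k, u.prod = of a) ∨
      ∃ j, j ≠ k ∧ ∃ (w : NeWord M i j) (a : M k), u.prod = w.prod * of a := by
  induction u with
  | singleton x _ => exact Or.inl ⟨rfl, x, prod_singleton _ _⟩
  | @append i j k l w₁ hne w₂ _ ih =>
    rcases ih with ⟨rfl, a, ha⟩ | ⟨j', hj', w, a, ha⟩
    · exact Or.inr ⟨j, hne, w₁, a, by rw [append_prod, ha]⟩
    · exact Or.inr ⟨j', hj', append w₁ hne w, a, by rw [append_prod, ha, append_prod, mul_assoc]⟩

end NeWord

theorem of_ne_of {i j : ι} (hij : i ≠ j) {x : M i} (hx : x ≠ 1) (y : M j) : of x ≠ of y := by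
  by_cases hy : y = 1
  · rw [hy, map_one]
    simpa using (NeWord.singleton x hx).prod_ne_one
  · intro h
    have := NeWord.toList_eq_of_prod_eq (.singleton x hx) (.singleton y hy) (by simpa using h)
    simp only [NeWord.toList, List.cons.injEq, and_true] at this
    exact hij (congrArg Sigma.fst this)

end Monoid

namespace NeWord

variable {ι : Type*} {G : ι → Type*} [∀ i, Group (G i)]

theorem exists_prod_eq_of_mul_head {k j : ι} (u : NeWord G k j) :
    (j = k ∧ ∃ b : G k, u.prod = of b) ∨
      ∃ i, i ≠ k ∧ ∃ (b : G k) (w : NeWord G i j), u.prod = of b * w.prod := by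
  rcases exists_prod_eq_mul_of_last u.inv with ⟨rfl, a, ha⟩ | ⟨i, hi, w, a, ha⟩
  · refine Or.inl ⟨rfl, a⁻¹, ?_⟩
    rw [map_inv, ← ha, inv_prod, inv_inv]
  · refine Or.inr ⟨i, hi, a⁻¹, w.inv, ?_⟩
    rw [map_inv, inv_prod, ← mul_inv_rev, ← ha, inv_prod, inv_inv]

def conjOf {i j : ι} (w : NeWord G i j) (hij : i ≠ j) (b : G j) (hb : b ≠ 1) : NeWord G j j :=
  append (append w.inv hij (singleton b hb)) hij.symm w

@[simp]
theorem prod_conjOf {i j : ι} (w : NeWord G i j) (hij : i ≠ j) (b : G j) (hb : b ≠ 1) :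
    (w.conjOf hij b hb).prod = w.prod⁻¹ * of b * w.prod := by
  simp [conjOf]

end NeWord

variable {H : Bool → Type*} [∀ i, Group (H i)]

theorem exists_eq_of_mul_of_or_eq_of_mul_prod_mul_of (c : CoprodI H) :
    ∃ (b : H true) (a : H false),
      c = of b * of a ∨ ∃ w : NeWord H false true, c = of b * w.prod * of a := by
  by_cases hc : c = 1
  · exact ⟨1, 1, Or.inl (by simp [hc])⟩
  obtain ⟨i, j, u, rfl⟩ := NeWord.exists_prod_eq hc
  cases i <;> cases j
  · rcases u.exists_prod_eq_mul_of_last with ⟨-, a, ha⟩ | ⟨j, hj, w, a, ha⟩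
    · exact ⟨1, a, Or.inl (by simp [ha])⟩
    · obtain rfl : j = true := by simpa using hj
      exact ⟨1, a, Or.inr ⟨w, by simp [ha]⟩⟩
  · exact ⟨1, 1, Or.inr ⟨u, by simp⟩⟩
  · rcases u.exists_prod_eq_of_mul_head with ⟨h, -⟩ | ⟨i, hi, b, w, hb⟩
    · cases h
    obtain rfl : i = false := by simpa using hi
    rcases w.exists_prod_eq_mul_of_last with ⟨-, a, ha⟩ | ⟨j, hj, w', a, ha⟩
    · exact ⟨b, a, Or.inl (by rw [hb, ha])⟩
    · obtain rfl : j = true := by simpa using hj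
      exact ⟨b, a, Or.inr ⟨w', by rw [hb, ha, mul_assoc]⟩⟩
  · rcases u.exists_prod_eq_of_mul_head with ⟨-, b, hb⟩ | ⟨i, hi, b, w, hb⟩
    · exact ⟨b, 1, Or.inl (by simp [hb])⟩
    · obtain rfl : i = false := by simpa using hi
      exact ⟨b, 1, Or.inr ⟨w, by simp [hb]⟩⟩

def conjGenerators (d : CoprodI H) : Set (CoprodI H) :=
  Set.range (of : H false →* CoprodI H) ∪ Set.range fun b : H true => d⁻¹ * of b * d

/-- The products `d⁻¹ b₁ d a₁ d⁻¹ b₂ d a₂ ⋯ d⁻¹ bₙ d aₙ` with all `bₖ ≠ 1` and all `aₖ ≠ 1`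
except possibly `aₙ`. -/
inductive IsAltConjProd (d : CoprodI H) : CoprodI H → Prop
  | conj_mul_of (b : H true) (a : H false) (hb : b ≠ 1) :
      IsAltConjProd d (d⁻¹ * of b * d * of a)
  | conj_mul_of_mul (b : H true) (a : H false) {z : CoprodI H} (hb : b ≠ 1) (ha : a ≠ 1)
      (hz : IsAltConjProd d z) : IsAltConjProd d (d⁻¹ * of b * d * of a * z)

def altConjProds (d : CoprodI H) : Set (CoprodI H) :=
  Set.range (of : H false →* CoprodI H) ∪
    {g | ∃ (a : H false) (z : CoprodI H), IsAltConjProd d z ∧ g = of a * z}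

theorem conj_mul_mem_altConjProds {d z : CoprodI H} (hz : IsAltConjProd d z) (b : H true) :
    d⁻¹ * of b * d * z ∈ altConjProds d := by
  have merge : ∀ (b₀ : H true) (t : CoprodI H),
      d⁻¹ * of b * d * (d⁻¹ * of b₀ * d * t) = d⁻¹ * of (b * b₀) * d * t := by
    intro b₀ t
    rw [map_mul]
    group
  cases hz with
  | conj_mul_of b₀ a _ =>
    rw [merge]
    by_cases hbb : b * b₀ = 1
    · exact Or.inl ⟨a, by rw [hbb, map_one]; group⟩
    · exact Or.inr ⟨1, _, .conj_mul_of _ a hbb, by rw [map_one, one_mul]⟩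
  | conj_mul_of_mul b₀ a _ ha hz =>
    rw [mul_assoc _ (of a), merge]
    by_cases hbb : b * b₀ = 1
    · exact Or.inr ⟨a, _, hz, by rw [hbb, map_one]; group⟩
    · exact Or.inr ⟨1, _, .conj_mul_of_mul _ a hbb ha hz, by rw [map_one, one_mul]; group⟩

theorem mul_mem_altConjProds {d x y : CoprodI H} (hx : x ∈ conjGenerators d)
    (hy : y ∈ altConjProds d) : x * y ∈ altConjProds d := by
  rcases hx with ⟨a', rfl⟩ | ⟨b, rfl⟩
  · rcases hy with ⟨a, rfl⟩ | ⟨a, z, hz, rfl⟩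
    · exact Or.inl ⟨a' * a, map_mul _ _ _⟩
    · exact Or.inr ⟨a' * a, z, hz, by rw [map_mul, mul_assoc]⟩
  by_cases hb : b = 1
  · simpa [hb] using hy
  rcases hy with ⟨a, rfl⟩ | ⟨a, z, hz, rfl⟩
  · exact Or.inr ⟨1, _, .conj_mul_of b a hb, by rw [map_one, one_mul]⟩
  by_cases ha : a = 1
  · simpa [ha] using conj_mul_mem_altConjProds hz b
  · exact Or.inr ⟨1, _, .conj_mul_of_mul b a hb ha hz, by rw [map_one, one_mul, ← mul_assoc]⟩

theorem inv_mem_conjGenerators {d x : CoprodI H} (hx : x ∈ conjGenerators d) :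
    x⁻¹ ∈ conjGenerators d := by
  rcases hx with ⟨a, rfl⟩ | ⟨b, rfl⟩
  · exact Or.inl ⟨a⁻¹, map_inv _ _⟩
  · exact Or.inr ⟨b⁻¹, by simp only [map_inv]; group⟩

theorem closure_conjGenerators_subset_altConjProds (d : CoprodI H) :
    (Subgroup.closure (conjGenerators d) : Set (CoprodI H)) ⊆ altConjProds d := by
  intro x hx
  induction hx using Subgroup.closure_induction_left with
  | one => exact Or.inl ⟨1, map_one _⟩
  | mul_left x hx y _ ih => exact mul_mem_altConjProds hx ih
  | inv_mul_cancel x hx y _ ih => exact mul_mem_altConjProds (inv_mem_conjGenerators hx) ih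

theorem IsAltConjProd.exists_neWord {w : NeWord H false true} {z : CoprodI H}
    (hz : IsAltConjProd w.prod z) :
    ∃ (j : Bool) (u : NeWord H true j), u.prod = z ∧ 2 ≤ u.toList.length := by
  induction hz with
  | conj_mul_of b a hb =>
    by_cases ha : a = 1
    · exact ⟨true, w.conjOf (by decide) b hb, by simp [ha],
        NeWord.two_le_length_toList_append ..⟩
    · exact ⟨false, .append (w.conjOf (by decide) b hb) (by decide) (.singleton a ha), by simp,
        NeWord.two_le_length_toList_append ..⟩
  | conj_mul_of_mul b a hb ha _ ih =>
    obtain ⟨j, u, rfl, -⟩ := ih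
    exact ⟨j, .append (w.conjOf (by decide) b hb) (by decide)
      (.append (.singleton a ha) (by decide) u), by simp [mul_assoc],
      NeWord.two_le_length_toList_append ..⟩

theorem of_last_notMem_closure_conjGenerators (w : NeWord H false true) :
    of w.last ∉ Subgroup.closure (conjGenerators w.prod) := by
  intro hmem
  rcases closure_conjGenerators_subset_altConjProds _ hmem with ⟨a, ha⟩ | ⟨a, z, hz, ha⟩
  · exact of_ne_of (by decide) w.last_ne_one a ha.symm
  obtain ⟨j, u, rfl, hu⟩ := hz.exists_neWord
  by_cases ha1 : a = 1
  · exact NeWord.of_ne_prod_of_two_le_length _ u hu (by simpa [ha1] using ha)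
  · exact NeWord.of_ne_prod_of_two_le_length _ (.append (.singleton a ha1) (by decide) u)
      (NeWord.two_le_length_toList_append ..) (by simpa using ha)

theorem closure_conjGenerators_le (b : H true) (d : CoprodI H) (a : H false) :
    Subgroup.closure (conjGenerators (of b * d * of a)) ≤ Subgroup.closure (conjGenerators d) := by
  rw [Subgroup.closure_le]
  rintro _ (⟨a', rfl⟩ | ⟨b', rfl⟩)
  · exact Subgroup.subset_closure (Or.inl ⟨a', rfl⟩)
  · have hconj : (of b * d * of a)⁻¹ * of b' * (of b * d * of a) =
        (of a)⁻¹ * (d⁻¹ * of (b⁻¹ * b' * b) * d) * of a := by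
      simp only [map_mul, map_inv]
      group
    simp only [hconj]
    refine mul_mem (mul_mem (inv_mem ?_) ?_) ?_ <;> apply Subgroup.subset_closure
    exacts [Or.inl ⟨a, rfl⟩, Or.inr ⟨_, rfl⟩, Or.inl ⟨a, rfl⟩]

theorem exists_eq_of_mul_of_of_closure_conjGenerators_eq_top {c : CoprodI H}
    (h : Subgroup.closure (conjGenerators c) = ⊤) :
    ∃ (b : H true) (a : H false), c = of b * of a := by
  obtain ⟨b, a, hc | ⟨w, rfl⟩⟩ := exists_eq_of_mul_of_or_eq_of_mul_prod_mul_of c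
  · exact ⟨b, a, hc⟩
  · refine absurd ?_ (of_last_notMem_closure_conjGenerators w)
    exact closure_conjGenerators_le b w.prod a (h ▸ Subgroup.mem_top _)

end Monoid.CoprodI

namespace Monoid.Coprod

universe u

variable {G₁ G₂ : Type u} [Group G₁] [Group G₂]

abbrev boolFamily (G₁ G₂ : Type u) : Bool → Type u := fun b => cond b G₂ G₁

instance instGroupBoolFamily : ∀ b, Group (boolFamily G₁ G₂ b)
  | false => ‹Group G₁›
  | true => ‹Group G₂›

noncomputable def mulEquivCoprodI : G₁ ∗ G₂ ≃* CoprodI (boolFamily G₁ G₂) :=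
  MonoidHom.toMulEquiv
    (lift (CoprodI.of (M := boolFamily G₁ G₂) (i := false))
      (CoprodI.of (M := boolFamily G₁ G₂) (i := true)))
    (CoprodI.lift fun | false => inl | true => inr)
    (by ext <;> simp)
    (CoprodI.ext_hom _ _ fun | false => by ext; simp | true => by ext; simp)

@[simp]
theorem mulEquivCoprodI_inl (a : G₁) :
    mulEquivCoprodI (inl a : G₁ ∗ G₂) = CoprodI.of (M := boolFamily G₁ G₂) (i := false) a :=
  rfl

@[simp]
theorem mulEquivCoprodI_inr (b : G₂) :
    mulEquivCoprodI (inr b : G₁ ∗ G₂) = CoprodI.of (M := boolFamily G₁ G₂) (i := true) b :=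
  rfl

theorem exists_eq_inr_mul_inl_of_closure_eq_top (c : G₁ ∗ G₂)
    (h : Subgroup.closure
      (Set.range (inl : G₁ →* G₁ ∗ G₂) ∪ Set.range fun b : G₂ => c⁻¹ * inr b * c) = ⊤) :
    ∃ (b : G₂) (a : G₁), c = inr b * inl a := by
  set e : G₁ ∗ G₂ ≃* CoprodI (boolFamily G₁ G₂) := mulEquivCoprodI
  have himage : e '' (Set.range (inl : G₁ →* G₁ ∗ G₂) ∪ Set.range fun b : G₂ => c⁻¹ * inr b * c) =
      CoprodI.conjGenerators (e c) := by
    simp only [Set.image_union, ← Set.range_comp]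
    congr 1
    ext
    simp [e]
  have htop : Subgroup.closure (CoprodI.conjGenerators (e c)) = ⊤ := by
    rw [← himage, ← MulEquiv.coe_toMonoidHom, ← MonoidHom.map_closure, h]
    exact Subgroup.map_equiv_top e
  obtain ⟨b, a, hba⟩ := CoprodI.exists_eq_of_mul_of_of_closure_conjGenerators_eq_top htop
  exact ⟨b, a, e.injective (by simpa [e] using hba)⟩

end Monoid.Coprod

theorem ZMod.exists_ofAdd_one_zpow_eq {n : ℕ} (x : Multiplicative (ZMod n)) :
    ∃ k : ℤ, Multiplicative.ofAdd (1 : ZMod n) ^ k = x := by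
  obtain ⟨k, hk⟩ := ZMod.intCast_surjective x.toAdd
  exact ⟨k, by rw [← ofAdd_zsmul, zsmul_one, hk, ofAdd_toAdd]⟩

open Monoid.Coprod

theorem generating_pair_forces_form_of_conjugator_general
    (r₁ r₂ : ℕ)
    (c : Monoid.Coprod (C r₁) (C r₂))
    (h : Subgroup.closure
        {(Monoid.Coprod.inl (Multiplicative.ofAdd (1 : ZMod r₁)) :
            Monoid.Coprod (C r₁) (C r₂)),
         c⁻¹ * Monoid.Coprod.inr (Multiplicative.ofAdd (1 : ZMod r₂)) * c} = ⊤) :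
    ∃ s t : ℤ,
      c = (Monoid.Coprod.inr (Multiplicative.ofAdd (1 : ZMod r₂)) :
            Monoid.Coprod (C r₁) (C r₂)) ^ s *
          (Monoid.Coprod.inl (Multiplicative.ofAdd (1 : ZMod r₁)) :
            Monoid.Coprod (C r₁) (C r₂)) ^ t := by
  have hgen : Subgroup.closure (Set.range (inl : C r₁ →* C r₁ ∗ C r₂) ∪
      Set.range fun b : C r₂ => c⁻¹ * inr b * c) = ⊤ := by
    refine eq_top_mono (Subgroup.closure_mono ?_) h
    rintro _ (rfl | rfl)
    exacts [Or.inl ⟨_, rfl⟩, Or.inr ⟨_, rfl⟩]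
  obtain ⟨b, a, rfl⟩ := exists_eq_inr_mul_inl_of_closure_eq_top c hgen
  obtain ⟨s, rfl⟩ := ZMod.exists_ofAdd_one_zpow_eq b
  obtain ⟨t, rfl⟩ := ZMod.exists_ofAdd_one_zpow_eq a
  exact ⟨s, t, by rw [map_zpow, map_zpow]⟩

/-- The generation exercise (Magnus–Karrass–Solitar, Exercise 15, p. 194): if
`{t₁, c⁻¹ t₂ c}` generates the free product `C r₁ ∗ C r₂`, then `c = t₂^s t₁^t`
for some integers `s, t`. -/
theorem generating_pair_forces_form_of_conjugator
    (r₁ r₂ : ℕ) (hr₁ : 2 ≤ r₁) (hr₂ : 2 ≤ r₂) (hr : Nat.gcd r₁ r₂ = 1)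
    (c : Monoid.Coprod (C r₁) (C r₂))
    (h : Subgroup.closure
        {(Monoid.Coprod.inl (Multiplicative.ofAdd (1 : ZMod r₁)) :
            Monoid.Coprod (C r₁) (C r₂)),
         c⁻¹ * Monoid.Coprod.inr (Multiplicative.ofAdd (1 : ZMod r₂)) * c} = ⊤) :
    ∃ s t : ℤ,
      c = (Monoid.Coprod.inr (Multiplicative.ofAdd (1 : ZMod r₂)) :
            Monoid.Coprod (C r₁) (C r₂)) ^ s *
          (Monoid.Coprod.inl (Multiplicative.ofAdd (1 : ZMod r₁)) :
            Monoid.Coprod (C r₁) (C r₂)) ^ t :=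
  generating_pair_forces_form_of_conjugator_general r₁ r₂ c h
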